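/- arXiv:2309.15579 — 5 statements merged into one kernel-verified Lean document; each statement's English description precedes it below -/
import Mathlib

section
/- Let (C, ⊗) be a locally presentable closed symmetric monoidal abelian category whose monoidal unit V is a finitely presented projective separator. Let N be a finitely presented object of C, and let {X_α} be a filtered inductive system in C with colimit X. Then the canonical morphism Ψ : colim_α Map(N, X_α) → Map(N, X) induced by the structure morphisms X_α → X is an isomorphism, where Map(−,−) denotes the internal hom of C. -/
open CategoryTheory CategoryTheory.Limits Opposite

universe v u

namespace Paper

variable {C : Type u} [Category.{v} C]

/-- The canonical comparison map `colim_α Hom(X, M_α) ⟶ Hom(X, colim_α M_α)` induced by the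
structure morphisms of a cocone `c` on a diagram `D`. -/
noncomputable def canonicalMap (X : C) {J : Type v} [SmallCategory J]
    (D : J ⥤ C) (c : Cocone D) :
    colimit (D ⋙ coyoneda.obj (op X)) → (X ⟶ c.pt) :=
  colimit.desc (D ⋙ coyoneda.obj (op X)) ((coyoneda.obj (op X)).mapCocone c)

/-- An object `X` is finitely presented if for every filtered inductive system the canonical map
`colim_α Hom(X, M_α) → Hom(X, colim_α M_α)` is bijective. -/
def IsFinitelyPresented (X : C) : Prop :=
  ∀ (J : Type v) [SmallCategory J] [IsFiltered J] (D : J ⥤ C) (c : Cocone D),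
    IsColimit c → Function.Bijective (canonicalMap X D c)

/-- An object `X` is finitely generated if for every filtered inductive system the canonical map
`colim_α Hom(X, M_α) → Hom(X, colim_α M_α)` is injective. -/
def IsFinitelyGenerated (X : C) : Prop :=
  ∀ (J : Type v) [SmallCategory J] [IsFiltered J] (D : J ⥤ C) (c : Cocone D),
    IsColimit c → Function.Injective (canonicalMap X D c)

/-- A small category `J` is `κ`-filtered if every diagram in `J` of size `< κ` admits a cocone. -/
def IsCardinalFiltered (J : Type v) [SmallCategory J] (κ : Cardinal.{v}) : Prop :=
  ∀ (K : Type v) [SmallCategory K], Cardinal.mk (Σ k k' : K, k ⟶ k') < κ →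
    ∀ F : K ⥤ J, Nonempty (Cocone F)

/-- An object `X` is `κ`-presentable if `Hom(X, -)` preserves `κ`-filtered colimits. -/
def IsCardinalPresentableObj (κ : Cardinal.{v}) (X : C) : Prop :=
  ∀ (J : Type v) [SmallCategory J], IsCardinalFiltered J κ →
    ∀ (D : J ⥤ C) (c : Cocone D), IsColimit c → Function.Bijective (canonicalMap X D c)

/-- A presentation of `X` as a `κ`-filtered colimit of objects belonging to `S`. -/
structure FilteredPresentation (κ : Cardinal.{v}) (S : Set C) (X : C) where
  J : Type v
  [cat : SmallCategory J]
  filtered : IsCardinalFiltered J κ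
  D : J ⥤ C
  mem : ∀ j, D.obj j ∈ S
  c : Cocone D
  isColimit : IsColimit c
  eq : c.pt = X

attribute [instance] FilteredPresentation.cat

/-- A category is locally presentable if it is cocomplete and there are a regular cardinal `κ`
and a set of `κ`-presentable objects such that every object is a `κ`-filtered colimit of
objects from this set. -/
class LocallyPresentable (C : Type u) [Category.{v} C] : Prop where
  hasColimits : HasColimits C
  presentable : ∃ κ : Cardinal.{v}, κ.IsRegular ∧ ∃ S : Set C, Small.{v} ↥S ∧
    (∀ X ∈ S, IsCardinalPresentableObj κ X) ∧ ∀ X : C, Nonempty (FilteredPresentation κ S X)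

instance (priority := 100) [LocallyPresentable C] : HasColimits C :=
  LocallyPresentable.hasColimits

end Paper

/-! The tensor-hom adjunction and `N ≅ N ⊗ 𝟙` identify `Hom(𝟙, Map(N, -))` with `Hom(N, -)`.
Since `N` is finitely presented, the `𝟙`-points of `Map(N, -)` therefore commute with filtered
colimits, and so do the `𝟙`-points of `colim Map(N, X_α)` because `𝟙` is finitely presented.
Hence `Ψ` is bijective on `𝟙`-points; as `𝟙` is a separator, `Ψ` is then both mono and epi,
so an isomorphism in the (balanced) abelian category `C`. -/

namespace Paper

section

variable {C : Type u} [Category.{v} C]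

lemma _root_.CategoryTheory.IsSeparator.isIso_of_bijective_comp [Balanced C] {V A B : C}
    (hV : IsSeparator V) (f : A ⟶ B) (h : Function.Bijective fun s : V ⟶ A => s ≫ f) :
    IsIso f := by
  have : Mono f := ⟨fun a b hab => hV.def a b fun s => h.1 (by simp [hab])⟩
  have : Epi f := ⟨fun t u htu => hV.def t u fun s => by
    obtain ⟨s, rfl⟩ := h.2 s
    simp [htu]⟩
  exact isIso_of_mono_of_epi f

variable {J : Type v} [SmallCategory J]

@[simp]
lemma canonicalMap_ι (X : C) (D : J ⥤ C) (c : Cocone D) (j : J) (x : X ⟶ D.obj j) :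
    canonicalMap X D c (colimit.ι (D ⋙ coyoneda.obj (op X)) j x) = x ≫ c.ι.app j :=
  ConcreteCategory.congr_hom (colimit.ι_desc ((coyoneda.obj (op X)).mapCocone c) j) x

lemma comp_desc_comp_canonicalMap (X : C) (D : J ⥤ C) {c : Cocone D} (hc : IsColimit c)
    (c₂ : Cocone D) :
    (fun s => s ≫ hc.desc c₂) ∘ canonicalMap X D c = canonicalMap X D c₂ := by
  funext y
  obtain ⟨j, x, rfl⟩ := Types.jointly_surjective' y
  simp only [Function.comp_apply, canonicalMap_ι, Category.assoc, hc.fac]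

lemma bijective_canonicalMap_mapCocone {C' : Type*} [Category.{v} C'] {G : C ⥤ C'} {V : C'}
    {N : C} (e : (G ⋙ coyoneda.obj (op V)).CorepresentableBy N) {D : J ⥤ C} {c : Cocone D}
    (h : Function.Bijective (canonicalMap N D c)) :
    Function.Bijective (canonicalMap V (D ⋙ G) (G.mapCocone c)) := by
  let α := HasColimit.isoOfNatIso (D.isoWhiskerLeft e.toIso.symm)
  have key :
      canonicalMap V (D ⋙ G) (G.mapCocone c) = e.homEquiv ∘ canonicalMap N D c ∘ α.hom := by
    funext y
    obtain ⟨j, x, rfl⟩ := Types.jointly_surjective' y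
    have hα : α.hom (colimit.ι ((D ⋙ G) ⋙ coyoneda.obj (op V)) j x) =
        colimit.ι (D ⋙ coyoneda.obj (op N)) j (e.homEquiv.symm x) :=
      ConcreteCategory.congr_hom (HasColimit.isoOfNatIso_ι_hom (D.isoWhiskerLeft e.toIso.symm) j) x
    simp only [Function.comp_apply, hα, canonicalMap_ι, e.homEquiv_comp,
      Equiv.apply_symm_apply]
    rfl
  rw [key]
  exact e.homEquiv.bijective.comp (h.comp α.toEquiv.bijective)

end

open MonoidalCategory MonoidalClosed in
theorem statement2_general {C : Type u} [Category.{v} C] [Abelian C] [MonoidalCategory C]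
    [MonoidalClosed C]
    (hV1 : IsFinitelyPresented (𝟙_ C))
    (hV3 : IsSeparator (𝟙_ C))
    (N : C) (hN : IsFinitelyPresented N)
    (J : Type v) [SmallCategory J] [IsFiltered J] (D : J ⥤ C)
    (c : Cocone D) (hc : IsColimit c)
    (c' : Cocone (D ⋙ ihom N)) (hc' : IsColimit c') :
    IsIso (hc'.desc ((ihom N).mapCocone c)) := by
  let e := ((ihom.adjunction N).corepresentableBy (𝟙_ C)).ofIsoObj (ρ_ N).symm
  have hΦ := bijective_canonicalMap_mapCocone e (hN J D c hc)
  rw [← comp_desc_comp_canonicalMap _ _ hc'] at hΦ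
  exact hV3.isIso_of_bijective_comp _
    ((Function.Bijective.of_comp_iff _ (hV1 J _ c' hc')).mp hΦ)

open MonoidalCategory MonoidalClosed in
/-- In a locally presentable closed symmetric monoidal abelian category whose
unit is a finitely presented projective separator, the internal hom `Map(N, -)` out of a
finitely presented object `N` preserves filtered colimits: the canonical morphism
`colim Map(N, X_a) → Map(N, colim X_a)` is an isomorphism. -/
theorem statement2 {C : Type u} [Category.{v} C] [Abelian C] [MonoidalCategory C]
    [SymmetricCategory C] [MonoidalClosed C] [LocallyPresentable C]
    (hV1 : IsFinitelyPresented (𝟙_ C)) (hV2 : Projective (𝟙_ C))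
    (hV3 : IsSeparator (𝟙_ C))
    (N : C) (hN : IsFinitelyPresented N)
    (J : Type v) [SmallCategory J] [IsFiltered J] (D : J ⥤ C)
    (c : Cocone D) (hc : IsColimit c)
    (c' : Cocone (D ⋙ ihom N)) (hc' : IsColimit c') :
    IsIso (hc'.desc ((ihom N).mapCocone c)) :=
  statement2_general hV1 hV3 N hN J D c hc c' hc'

end Paper
end

section
/- Let A be a commutative ring, I a finitely generated ideal of A, and M an A-module. Then the I-adic completion \hat{M} = lim_n M/(I^n M) is I-adically complete: the canonical map \hat{M} → lim_n \hat{M}/(I^n \hat{M}) is bijective (i.e., \hat{M} is I-adically Hausdorff and the map is surjective). -/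
/-- For a finitely generated ideal `I` of a commutative ring `A` and an
`A`-module `M`, the `I`-adic completion of `M` is `I`-adically complete. -/
theorem statement11 {A : Type*} [CommRing A] (I : Ideal A) (hI : I.FG)
    (M : Type*) [AddCommGroup M] [Module A M] :
    IsAdicComplete I (AdicCompletion I M) :=
  AdicCompletion.isAdicComplete hI
end

section
/- Let A be a commutative ring and I a finitely generated ideal of A. Let \hat{A} = lim_n A/I^n be the I-adic completion of A, with canonical projections π_n : \hat{A} → A/I^n. Then for every n ≥ 1, the ideal I^n \hat{A} of \hat{A} generated by the image of I^n under the canonical ring homomorphism A → \hat{A} equals the kernel of π_n. -/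
namespace AdicCompletion

theorem evalₐ_eq_zero_iff {R : Type*} [CommRing R] (I : Ideal R) (n : ℕ)
    (x : AdicCompletion I R) : evalₐ I n x = 0 ↔ eval I R n x = 0 :=
  EmbeddingLike.map_eq_zero_iff (f := Ideal.quotientEquivAlgOfEq R (by simp))

end AdicCompletion

theorem statement12_general {A : Type*} [CommRing A] (I : Ideal A) (hI : I.FG)
    (n : ℕ) :
    Ideal.map (algebraMap A (AdicCompletion I A)) (I ^ n) =
      RingHom.ker (AdicCompletion.evalₐ I n) := by
  ext x
  rw [RingHom.mem_ker, AdicCompletion.evalₐ_eq_zero_iff, ← LinearMap.mem_ker,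
    ← AdicCompletion.pow_smul_top_eq_ker_eval hI, Ideal.smul_top_eq_map,
    Submodule.restrictScalars_mem]

/-- For a finitely generated ideal `I` of a commutative ring `A`, the ideal
of the `I`-adic completion generated by the image of `I ^ n` is the kernel of the canonical
projection to `A ⧸ I ^ n`, for every `n ≥ 1`. -/
theorem statement12 {A : Type*} [CommRing A] (I : Ideal A) (hI : I.FG)
    (n : ℕ) (hn : 1 ≤ n) :
    Ideal.map (algebraMap A (AdicCompletion I A)) (I ^ n) =
      RingHom.ker (AdicCompletion.evalₐ I n) :=
  statement12_general I hI n
end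

section
/- Let A be a commutative ring and I a finitely generated ideal of A. Let \hat{A} = lim_n A/I^n be the I-adic completion of A and let \hat{I} = I\hat{A} be the ideal of \hat{A} generated by the image of I under the canonical ring homomorphism A → \hat{A}. Then \hat{A} is \hat{I}-adically complete: the canonical map \hat{A} → lim_n \hat{A}/\hat{I}^n is bijective. -/
/-- For a finitely generated ideal `I` of a commutative ring `A`, the
`I`-adic completion of `A` is adically complete with respect to the extended ideal
`I·Â = Ideal.map (algebraMap A Â) I`. -/
theorem statement13 {A : Type*} [CommRing A] (I : Ideal A) (hI : I.FG) :
    IsAdicComplete (Ideal.map (algebraMap A (AdicCompletion I A)) I)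
      (AdicCompletion I A) :=
  (IsAdicComplete.map_algebraMap_iff I _).mpr (AdicCompletion.isAdicComplete hI)
end

section
/- Let A be a commutative ring, I a finitely generated ideal of A, and M an A-module. Let \hat{M} = lim_n M/(I^n M) be the I-adic completion of M, with canonical projections π_n : \hat{M} → M/(I^n M). Then for every n ≥ 1, the submodule I^n \hat{M} of \hat{M} equals the kernel of π_n. -/
theorem statement14_general {A : Type*} [CommRing A] (I : Ideal A) (hI : I.FG)
    (M : Type*) [AddCommGroup M] [Module A M] (n : ℕ) :
    (I ^ n • ⊤ : Submodule A (AdicCompletion I M)) =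
      LinearMap.ker (AdicCompletion.eval I M n) :=
  AdicCompletion.pow_smul_top_eq_ker_eval hI

/-- For a finitely generated ideal `I` of a commutative ring `A` and an
`A`-module `M`, the submodule `I ^ n • M̂` of the `I`-adic completion `M̂` equals the kernel of
the canonical projection `M̂ → M ⧸ I ^ n M`, for every `n ≥ 1`. -/
theorem statement14 {A : Type*} [CommRing A] (I : Ideal A) (hI : I.FG)
    (M : Type*) [AddCommGroup M] [Module A M] (n : ℕ) (hn : 1 ≤ n) :
    (I ^ n • ⊤ : Submodule A (AdicCompletion I M)) =
      LinearMap.ker (AdicCompletion.eval I M n) :=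
  statement14_general I hI M n
end
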